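/- Let G be a finite simple graph with m edges, let p : S → C be a partial coloring of G, and let H be the vertex–edge incidence graph of G with the partial coloring q that precolors each vertex a_u for u ∈ S with p(u) (and precolors no edge-vertex). Then for every nonnegative integer k, there exists a total coloring of G extending p with at least k happy edges if and only if there exists a total coloring of H extending q with at least m + k happy edges. -/

import Mathlib

/-- The number of happy edges (edges whose endpoints share a color) w.r.t. a total coloring. -/
noncomputable def happyEdgeCount {V Col : Type*} (G : SimpleGraph V) (c : V → Col) : ℕ :=
  {e ∈ G.edgeSet | (Sym2.map c e).IsDiag}.ncard

/-- The vertex–edge incidence graph of a graph: a vertex `u` of `G` is adjacent to an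
edge-vertex `e` of `G` exactly when `u` is an endpoint of `e`. -/
def IncidenceGraph {V : Type*} (G : SimpleGraph V) : SimpleGraph (V ⊕ G.edgeSet) where
  Adj x y :=
    match x, y with
    | Sum.inl u, Sum.inr e => u ∈ (e : Sym2 V)
    | Sum.inr e, Sum.inl u => u ∈ (e : Sym2 V)
    | _, _ => False
  symm := by
    exact ⟨by rintro (u | e) (u' | e') h <;> simp_all⟩
  loopless := by
    exact ⟨by rintro (u | e) h <;> simp_all⟩

/-!
Each edge-vertex `e = s(a, b)` of the incidence graph lies on exactly two edges, `a — e` and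
`b — e`, and such an edge is happy when the colour of `e` equals that of its endpoint in `G`.
So `e` contributes at most `1 + [c a = c b]` happy edges, and exactly that many once `e` gets
the colour of one of its endpoints. Summing over the edges of `G` gives
`happy(H) ≤ m + happy(G)` for every colouring of `H`, with equality for these extensions.
-/

open Function Set Sum

namespace Sym2

variable {α β : Type*}

lemma ncard_setOf_mem_mk_and {a b : α} (hab : a ≠ b) (P : α → Prop) [DecidablePred P] :
    {u | u ∈ s(a, b) ∧ P u}.ncard = (if P a then 1 else 0) + if P b then 1 else 0 := by
  classical
  have hset : {u | u ∈ s(a, b) ∧ P u} = ↑(({a, b} : Finset α).filter P) := by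
    ext u; simp
  rw [hset, ncard_coe_finset, Finset.filter_insert, Finset.filter_singleton]
  split_ifs <;> simp [hab]

lemma ncard_setOf_mem_and_eq_le [DecidableEq β] {z : Sym2 α} (hz : ¬z.IsDiag) (f : α → β)
    (x : β) : {u | u ∈ z ∧ f u = x}.ncard ≤ 1 + if (z.map f).IsDiag then 1 else 0 := by
  induction z with
  | _ a b =>
    rw [ncard_setOf_mem_mk_and (by simpa using hz), map_mk]
    simp only [mk_isDiag_iff]
    split_ifs <;> simp_all

lemma ncard_setOf_mem_and_eq_apply [DecidableEq β] {z : Sym2 α} (hz : ¬z.IsDiag) (f : α → β)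
    {a : α} (ha : a ∈ z) :
    {u | u ∈ z ∧ f u = f a}.ncard = 1 + if (z.map f).IsDiag then 1 else 0 := by
  induction z with
  | _ b c =>
    rw [ncard_setOf_mem_mk_and (by simpa using hz), map_mk]
    simp only [mk_isDiag_iff]
    obtain rfl | rfl := mem_iff.mp ha <;> split_ifs <;> grind

end Sym2

section

variable {V Col : Type*} (G : SimpleGraph V)

lemma happyEdgeCount_eq_sum [Fintype G.edgeSet] [DecidableEq Col] (c : V → Col) :
    happyEdgeCount G c = ∑ e : G.edgeSet, if ((e : Sym2 V).map c).IsDiag then 1 else 0 := by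
  have hset : {e ∈ G.edgeSet | (e.map c).IsDiag}
      = Subtype.val '' {e : G.edgeSet | ((e : Sym2 V).map c).IsDiag} := by
    ext e
    simp [and_comm]
  rw [happyEdgeCount, hset, ncard_image_of_injective _ Subtype.val_injective,
    ncard_eq_toFinset_card', toFinset_ofPred, Finset.card_filter]

lemma happyEdgeCount_incidenceGraph [Fintype G.edgeSet] (c : V ⊕ G.edgeSet → Col) :
    happyEdgeCount (IncidenceGraph G) c
      = ∑ e : G.edgeSet, {u | u ∈ (e : Sym2 V) ∧ c (inl u) = c (inr e)}.ncard := by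
  let A (e : G.edgeSet) : Set V := {u | u ∈ (e : Sym2 V) ∧ c (inl u) = c (inr e)}
  let f : (Σ e, A e) → Sym2 (V ⊕ G.edgeSet) := fun x => s(inl x.2, inr x.1)
  have hf : Injective f := by
    rintro ⟨e, u⟩ ⟨e', u'⟩ h
    obtain ⟨hu, rfl⟩ : (u : V) = u' ∧ e = e' := by simpa [f] using h
    rw [Subtype.ext hu]
  have hrange : range f = {z ∈ (IncidenceGraph G).edgeSet | (z.map c).IsDiag} := by
    ext z
    induction z with
    | _ x y =>
      rcases x with u | e <;> rcases y with u' | e' <;> simp [f, A, IncidenceGraph]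
      exact fun _ => eq_comm
  have (e : G.edgeSet) : Finite (A e) := by
    classical
    exact ((e : Sym2 V).toFinset.finite_toSet.subset
      fun u hu => Sym2.mem_toFinset.mpr hu.1).to_subtype
  rw [happyEdgeCount, ← hrange, ncard_range_of_injective hf, Nat.card_sigma]
  simp only [Nat.card_coe_set_eq, A]

lemma ncard_edgeSet_add_happyEdgeCount [Fintype G.edgeSet] [DecidableEq Col] (c : V → Col) :
    G.edgeSet.ncard + happyEdgeCount G c
      = ∑ e : G.edgeSet, (1 + if ((e : Sym2 V).map c).IsDiag then 1 else 0) := by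
  rw [happyEdgeCount_eq_sum, Finset.sum_add_distrib, ← Nat.card_coe_set_eq,
    Nat.card_eq_fintype_card, Finset.sum_const, smul_eq_mul, mul_one, Finset.card_univ]

lemma happyEdgeCount_incidenceGraph_le [Finite G.edgeSet] (c : V ⊕ G.edgeSet → Col) :
    happyEdgeCount (IncidenceGraph G) c ≤ G.edgeSet.ncard + happyEdgeCount G (c ∘ inl) := by
  classical
  have := Fintype.ofFinite G.edgeSet
  rw [happyEdgeCount_incidenceGraph, ncard_edgeSet_add_happyEdgeCount]
  exact Finset.sum_le_sum fun e _ =>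
    Sym2.ncard_setOf_mem_and_eq_le (G.not_isDiag_of_mem_edgeSet e.2) (c ∘ inl) (c (inr e))

lemma happyEdgeCount_incidenceGraph_elim_out [Finite G.edgeSet] (c : V → Col) :
    happyEdgeCount (IncidenceGraph G) (Sum.elim c fun e => c (e : Sym2 V).out.1)
      = G.edgeSet.ncard + happyEdgeCount G c := by
  classical
  have := Fintype.ofFinite G.edgeSet
  rw [happyEdgeCount_incidenceGraph, ncard_edgeSet_add_happyEdgeCount]
  exact Finset.sum_congr rfl fun e _ =>
    Sym2.ncard_setOf_mem_and_eq_apply (G.not_isDiag_of_mem_edgeSet e.2) c (Sym2.out_fst_mem _)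

end

theorem incidenceGraph_happyEdges_iff_general
    {V Col : Type*} [Fintype V] (G : SimpleGraph V)
    (S : Set V) (p : S → Col) (k : ℕ) :
    (∃ c : V → Col, (∀ v (hv : v ∈ S), c v = p ⟨v, hv⟩) ∧ k ≤ happyEdgeCount G c) ↔
    (∃ c' : (V ⊕ G.edgeSet) → Col, (∀ v (hv : v ∈ S), c' (Sum.inl v) = p ⟨v, hv⟩) ∧
      G.edgeSet.ncard + k ≤ happyEdgeCount (IncidenceGraph G) c') := by
  constructor
  · rintro ⟨c, hcp, hk⟩
    refine ⟨Sum.elim c fun e => c (e : Sym2 V).out.1, hcp, ?_⟩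
    rw [happyEdgeCount_incidenceGraph_elim_out]
    omega
  · rintro ⟨c, hcp, hk⟩
    have := happyEdgeCount_incidenceGraph_le G c
    exact ⟨c ∘ inl, hcp, by omega⟩

/-- `G` with partial coloring `p` admits an extension with at least `k` happy edges iff the
incidence graph of `G`, precolored by `p` on the vertex side, admits an extension with at
least `m + k` happy edges. -/
theorem incidenceGraph_happyEdges_iff
    {V Col : Type*} [Fintype V] [DecidableEq V] (G : SimpleGraph V) [DecidableRel G.Adj]
    (S : Set V) (p : S → Col) (k : ℕ) :
    (∃ c : V → Col, (∀ v (hv : v ∈ S), c v = p ⟨v, hv⟩) ∧ k ≤ happyEdgeCount G c) ↔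
    (∃ c' : (V ⊕ G.edgeSet) → Col, (∀ v (hv : v ∈ S), c' (Sum.inl v) = p ⟨v, hv⟩) ∧
      G.edgeSet.ncard + k ≤ happyEdgeCount (IncidenceGraph G) c') :=
  incidenceGraph_happyEdges_iff_general G S p k
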